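/- arXiv:2206.01458 — 2 statements merged into one kernel-verified Lean document; each statement's English description precedes it below -/
import Mathlib

section
/- Let H be a separable real Hilbert space, h : H × H → H measurable, and X, X̃ independent identically distributed H-valued random variables such that h₁(x) := E[h(x,X̃)] is a well-defined Bochner integral for every x ∈ H. Suppose h satisfies the variation condition: there exist L, ε₀ > 0 such that for every ε ∈ (0,ε₀), E[( sup_{‖x−X‖≤ε, ‖y−X̃‖≤ε} ‖h(x,y) − h(X,X̃)‖ )²] ≤ Lε (the expectation of the supremum interpreted as an upper/outer integral if necessary). Then for every ε ∈ (0,ε₀), E[( sup_{‖x−X‖≤ε} ‖h₁(x) − h₁(X)‖ )²] ≤ Lε. -/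
open MeasureTheory ProbabilityTheory

open MeasureTheory Filter Set Topology
open scoped ENNReal NNReal

lemma lintegral_sq' {β : Type*} [MeasurableSpace β] (m : Measure β) [IsProbabilityMeasure m]
    {F : β → ℝ≥0∞} (hF : AEMeasurable F m) :
    (∫⁻ v, F v ∂m) ^ 2 ≤ ∫⁻ v, (F v) ^ 2 ∂m := by
  have hconj : Real.HolderConjugate 2 2 := ⟨by norm_num, by norm_num, by norm_num⟩
  have h := ENNReal.lintegral_mul_le_Lp_mul_Lq m hconj hF (aemeasurable_const (b := (1 : ℝ≥0∞)))
  simp only [Pi.mul_apply, mul_one, ENNReal.one_rpow, lintegral_one, measure_univ,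
    ENNReal.one_rpow, one_mul] at h
  calc (∫⁻ v, F v ∂m) ^ 2 ≤ ((∫⁻ v, F v ^ (2:ℝ) ∂m) ^ (1 / (2:ℝ))) ^ 2 :=
        pow_le_pow_left₀ zero_le h 2
    _ = ∫⁻ v, F v ^ (2:ℝ) ∂m := by
        rw [← ENNReal.rpow_natCast (_ ^ (1 / (2:ℝ))) 2, ← ENNReal.rpow_mul]
        norm_num
    _ = ∫⁻ v, (F v) ^ 2 ∂m := by
        congr 1; funext v; rw [← ENNReal.rpow_natCast (F v) 2]; norm_num

lemma sq_biSup_le {ι : Type*} {S : Set ι} {c : ι → ℝ≥0∞} {b : ℝ≥0∞}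
    (hb : ∀ x ∈ S, c x ^ 2 ≤ b) : (⨆ x ∈ S, c x) ^ 2 ≤ b := by
  have h1 : (⨆ x ∈ S, c x) ≤ b ^ ((1:ℝ) / 2) := by
    refine iSup₂_le fun x hx => ?_
    calc c x = (c x ^ 2) ^ ((1:ℝ) / 2) := by
          rw [← ENNReal.rpow_natCast (c x) 2, ← ENNReal.rpow_mul]; norm_num
      _ ≤ b ^ ((1:ℝ) / 2) := ENNReal.rpow_le_rpow (hb x hx) (by norm_num)
  calc (⨆ x ∈ S, c x) ^ 2 ≤ (b ^ ((1:ℝ) / 2)) ^ 2 := pow_le_pow_left₀ zero_le h1 2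
    _ = b := by rw [← ENNReal.rpow_natCast (b ^ ((1:ℝ)/2)) 2, ← ENNReal.rpow_mul]; norm_num

lemma exists_measurable_majorant {α : Type*} [MeasurableSpace α] (μ : Measure α)
    (g : α → ℝ≥0∞) (hg : ∀ t : ℝ≥0∞, NullMeasurableSet {x | t < g x} μ) :
    ∃ G : α → ℝ≥0∞, Measurable G ∧ (∀ x, g x ≤ G x) ∧ G =ᵐ[μ] g := by
  classical
  set e : ℚ → ℝ≥0∞ := fun q => ((q : ℝ).toNNReal : ℝ≥0∞) with he
  set A : ℚ → Set α := fun q => {x | e q < g x} with hA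
  set M : ℚ → Set α := fun q => toMeasurable μ (A q) with hM
  have hAM : ∀ q, A q ⊆ M q := fun q => subset_toMeasurable _ _
  have hMnull : ∀ q, μ (M q \ A q) = 0 := by
    intro q
    have := (hg (e q)).toMeasurable_ae_eq
    exact (ae_eq_set.mp this).1
  set N : Set α := ⋃ q : ℚ, toMeasurable μ (M q \ A q) with hN
  have hNm : MeasurableSet N :=
    MeasurableSet.iUnion fun q => measurableSet_toMeasurable _ _
  have hNnull : μ N = 0 := by
    refine measure_iUnion_null fun q => ?_
    rw [measure_toMeasurable]; exact hMnull q
  have hMN : ∀ q, M q \ A q ⊆ N := fun q =>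
    (subset_toMeasurable _ _).trans
      (subset_iUnion (fun q => toMeasurable μ (M q \ A q)) q)
  set g₀ : α → ℝ≥0∞ := fun x => ⨆ q : ℚ, (M q).indicator (fun _ => e q) x with hg₀
  have hg₀m : Measurable g₀ :=
    Measurable.iSup fun q => (measurable_const.indicator (measurableSet_toMeasurable _ _))
  refine ⟨N.piecewise (fun _ => ∞) g₀, Measurable.piecewise hNm measurable_const hg₀m, ?_, ?_⟩
  · intro x
    by_cases hx : x ∈ N
    · simp [Set.piecewise_eq_of_mem _ _ _ hx]
    · rw [Set.piecewise_eq_of_notMem _ _ _ hx]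
      refine le_of_forall_lt fun c hc => ?_
      obtain ⟨q, -, hq1, hq2⟩ := ENNReal.lt_iff_exists_rat_btwn.mp hc
      have hxA : x ∈ A q := hq2
      have hxM : x ∈ M q := hAM q hxA
      calc c < e q := hq1
        _ = (M q).indicator (fun _ => e q) x := by rw [indicator_of_mem hxM]
        _ ≤ g₀ x := le_iSup (fun q => (M q).indicator (fun _ => e q) x) q
  · have hae : ∀ᵐ x ∂μ, x ∉ N := by
      rw [ae_iff]; simpa using hNnull
    filter_upwards [hae] with x hx
    rw [Set.piecewise_eq_of_notMem _ _ _ hx]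
    refine le_antisymm (iSup_le fun q => ?_) ?_
    · by_cases hxM : x ∈ M q
      · rw [indicator_of_mem hxM]
        by_cases hxA : x ∈ A q
        · exact (le_of_lt hxA)
        · exact absurd (hMN q ⟨hxM, hxA⟩) hx
      · rw [indicator_of_notMem hxM]; exact zero_le
    · refine le_of_forall_lt fun c hc => ?_
      obtain ⟨q, -, hq1, hq2⟩ := ENNReal.lt_iff_exists_rat_btwn.mp hc
      have hxA : x ∈ A q := hq2
      calc c < e q := hq1
        _ = (M q).indicator (fun _ => e q) x := by rw [indicator_of_mem (hAM q hxA)]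
        _ ≤ g₀ x := le_iSup (fun q => (M q).indicator (fun _ => e q) x) q

theorem analyticSet_nullMeasurableSet {α : Type*} [TopologicalSpace α] [T2Space α]
    [MeasurableSpace α] [OpensMeasurableSpace α] {A : Set α}
    (hA : AnalyticSet A) (μ : Measure α) [IsFiniteMeasure μ] :
    NullMeasurableSet A μ := by
  rw [AnalyticSet_def] at hA
  rcases hA with rfl | ⟨f, hf, rfl⟩
  · exact MeasurableSet.empty.nullMeasurableSet
  have key : ∀ δ : ℝ≥0∞, 0 < δ → δ ≠ ∞ →
      ∃ C : Set α, MeasurableSet C ∧ C ⊆ range f ∧ μ (range f) ≤ μ C + δ := by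
    intro δ hδ hδtop
    have step : ∀ (T : Set (ℕ → ℕ)) (n : ℕ), ∃ m : ℕ,
        μ (f '' T) ≤ μ (f '' (T ∩ {σ | σ n ≤ m})) + δ * 2⁻¹ ^ (n + 1) := by
      intro T n
      set d : ℝ≥0∞ := δ * 2⁻¹ ^ (n + 1) with hd
      have hd0 : d ≠ 0 :=
        mul_ne_zero hδ.ne' (pow_ne_zero _ (ENNReal.inv_ne_zero.mpr (by norm_num)))
      have hdtop : d ≠ ∞ :=
        ENNReal.mul_ne_top hδtop (ENNReal.pow_ne_top (ENNReal.inv_ne_top.mpr (by norm_num)))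
      have hmono : Monotone (fun m : ℕ => f '' (T ∩ {σ | σ n ≤ m})) := by
        intro a b hab
        exact image_mono (inter_subset_inter_right _ (fun σ hσ => le_trans hσ hab))
      have hU0 : ⋃ m : ℕ, (T ∩ {σ : ℕ → ℕ | σ n ≤ m}) = T :=
        Subset.antisymm (iUnion_subset fun m => inter_subset_left) fun σ hσ =>
          mem_iUnion.mpr ⟨σ n, ⟨hσ, le_refl (σ n)⟩⟩
      have hU : ⋃ m : ℕ, f '' (T ∩ {σ | σ n ≤ m}) = f '' T := by
        rw [← image_iUnion, hU0]
      have hsup : μ (f '' T) = ⨆ m : ℕ, μ (f '' (T ∩ {σ | σ n ≤ m})) := by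
        rw [← hU, hmono.measure_iUnion]
      by_cases hle : μ (f '' T) ≤ d
      · exact ⟨0, hle.trans le_add_self⟩
      push_neg at hle
      have hfin : μ (f '' T) ≠ ∞ := measure_ne_top μ _
      have h1 : μ (f '' T) - d < μ (f '' T) :=
        ENNReal.sub_lt_self hfin ((zero_le : 0 ≤ d).trans_lt hle).ne' hd0
      have h1' : μ (f '' T) - d < ⨆ m : ℕ, μ (f '' (T ∩ {σ | σ n ≤ m})) :=
        lt_of_lt_of_le h1 hsup.le
      obtain ⟨m, hm⟩ := lt_iSup_iff.mp h1'
      exact ⟨m, ((ENNReal.sub_lt_iff_lt_right hdtop hle.le).mp hm).le⟩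
    choose stepm hstep using step
    set K : ℕ → Set (ℕ → ℕ) :=
      fun n => Nat.rec univ (fun n T => T ∩ {σ | σ n ≤ stepm T n}) n with hK
    have hKsucc : ∀ n, K (n + 1) = K n ∩ {σ | σ n ≤ stepm (K n) n} := fun n => rfl
    have hKanti : Antitone K := antitone_nat_of_succ_le fun n => by
      rw [hKsucc]; exact inter_subset_left
    have hsum : ∀ n : ℕ, (∑ i ∈ Finset.range n, (2⁻¹ : ℝ≥0∞) ^ (i + 1)) ≤ 1 := by
      intro n
      calc (∑ i ∈ Finset.range n, (2⁻¹ : ℝ≥0∞) ^ (i + 1))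
          ≤ ∑' i : ℕ, (2⁻¹ : ℝ≥0∞) ^ (i + 1) := ENNReal.sum_le_tsum _
        _ = 2⁻¹ * ∑' i : ℕ, (2⁻¹ : ℝ≥0∞) ^ i := by
            rw [← ENNReal.tsum_mul_left]
            congr 1; funext i; rw [pow_succ, mul_comm]
        _ = 2⁻¹ * (1 - 2⁻¹)⁻¹ := by rw [ENNReal.tsum_geometric]
        _ = 1 := by
            rw [ENNReal.one_sub_inv_two]
            exact ENNReal.mul_inv_cancel (ENNReal.inv_ne_zero.mpr (by norm_num))
              (ENNReal.inv_ne_top.mpr (by norm_num))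
    have hinv : ∀ n, μ (range f) ≤ μ (f '' K n) + δ * ∑ i ∈ Finset.range n, 2⁻¹ ^ (i + 1) := by
      intro n
      induction n with
      | zero =>
        simp only [Finset.range_zero, Finset.sum_empty, mul_zero, add_zero]
        rw [show K 0 = univ from rfl, image_univ]
      | succ n ih =>
        calc μ (range f) ≤ μ (f '' K n) + δ * ∑ i ∈ Finset.range n, 2⁻¹ ^ (i + 1) := ih
          _ ≤ (μ (f '' K (n + 1)) + δ * 2⁻¹ ^ (n + 1)) +
                δ * ∑ i ∈ Finset.range n, 2⁻¹ ^ (i + 1) :=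
              add_le_add_left (hstep (K n) n) _
          _ = μ (f '' K (n + 1)) + δ * ∑ i ∈ Finset.range (n + 1), 2⁻¹ ^ (i + 1) := by
              rw [Finset.sum_range_succ, mul_add]
              ring
    have hbound : ∀ n, μ (range f) ≤ μ (f '' K n) + δ := by
      intro n
      refine (hinv n).trans (add_le_add_right ?_ _)
      calc δ * ∑ i ∈ Finset.range n, 2⁻¹ ^ (i + 1) ≤ δ * 1 :=
            mul_le_mul_right (hsum n) δ
        _ = δ := mul_one δ
    set B : ℕ → Set α := fun n => f '' K n with hB
    have hBanti : Antitone B := fun a b hab => image_mono (hKanti hab)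
    have hclanti : Antitone (fun n => closure (B n)) := fun a b hab => closure_mono (hBanti hab)
    refine ⟨⋂ n, closure (B n),
      MeasurableSet.iInter (fun n => isClosed_closure.measurableSet), ?_, ?_⟩
    · -- ⊆ range f
      intro x hx
      simp only [mem_iInter] at hx
      have hne : (𝓝 x ⊓ ⨅ n, 𝓟 (B n)).NeBot := by
        have hbas : (⨅ n : ℕ, 𝓟 (B n)).HasBasis (fun _ : ℕ => True) B :=
          hasBasis_iInf_principal hBanti.directed_ge
        have hbas2 := (𝓝 x).basis_sets.inf hbas
        rw [hbas2.neBot_iff]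
        rintro ⟨U, n⟩ ⟨hU, -⟩
        exact mem_closure_iff_nhds.mp (hx n) U hU
      set 𝒰 : Ultrafilter α := Ultrafilter.of (𝓝 x ⊓ ⨅ n, 𝓟 (B n)) with h𝒰def
      have h𝒰 : ↑𝒰 ≤ 𝓝 x ⊓ ⨅ n, 𝓟 (B n) := Ultrafilter.of_le _
      have h𝒰x : ↑𝒰 ≤ 𝓝 x := h𝒰.trans inf_le_left
      have h𝒰B : ∀ n, B n ∈ 𝒰 := fun n =>
        (h𝒰.trans (inf_le_right.trans (iInf_le _ n))) (mem_principal_self _)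
      have hGne : ((⨅ n, 𝓟 (K n)) ⊓ Filter.comap f ↑𝒰).NeBot := by
        have hbasK : (⨅ n : ℕ, 𝓟 (K n)).HasBasis (fun _ : ℕ => True) K :=
          hasBasis_iInf_principal hKanti.directed_ge
        have hbas2 := hbasK.inf ((𝒰 : Filter α).basis_sets.comap f)
        rw [hbas2.neBot_iff]
        rintro ⟨n, U⟩ ⟨-, hU⟩
        have hmem : B n ∩ U ∈ 𝒰 := inter_mem (h𝒰B n) hU
        obtain ⟨y, ⟨σ, hσK, rfl⟩, hyU⟩ := 𝒰.nonempty_of_mem hmem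
        exact ⟨σ, hσK, hyU⟩
      set 𝒱 : Ultrafilter (ℕ → ℕ) :=
        Ultrafilter.of ((⨅ n, 𝓟 (K n)) ⊓ Filter.comap f ↑𝒰) with h𝒱def
      have h𝒱 : ↑𝒱 ≤ (⨅ n, 𝓟 (K n)) ⊓ Filter.comap f ↑𝒰 := Ultrafilter.of_le _
      have hVK : ∀ n, K n ∈ 𝒱 := fun n =>
        (h𝒱.trans (inf_le_left.trans (iInf_le _ n))) (mem_principal_self _)
      have hcoord : ∀ i : ℕ, ∃ a : ℕ, {σ : ℕ → ℕ | σ i = a} ∈ 𝒱 := by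
        intro i
        have hE : {σ : ℕ → ℕ | σ i ≤ stepm (K i) i} ∈ 𝒱 :=
          mem_of_superset (hVK (i + 1)) (by rw [hKsucc]; exact inter_subset_right)
        have hEU : {σ : ℕ → ℕ | σ i ≤ stepm (K i) i} =
            ⋃ a ∈ Set.Iic (stepm (K i) i), {σ : ℕ → ℕ | σ i = a} := by
          ext σ
          simp only [mem_setOf_eq, mem_iUnion, mem_Iic, exists_prop]
          exact ⟨fun h => ⟨σ i, h, rfl⟩, fun ⟨b, hb, h⟩ => h ▸ hb⟩
        rw [hEU] at hE
        obtain ⟨b, -, hb⟩ := (Ultrafilter.finite_biUnion_mem_iff (finite_Iic _)).mp hE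
        exact ⟨b, hb⟩
      choose a ha using hcoord
      have ht1 : Tendsto (fun σ : ℕ → ℕ => σ) ↑𝒱 (𝓝 a) := by
        rw [tendsto_pi_nhds]
        intro i
        rw [nhds_discrete ℕ, tendsto_pure]
        exact ha i
      have ht2 : Tendsto f ↑𝒱 (𝓝 (f a)) := (hf.tendsto a).comp ht1
      have ht3 : Tendsto f ↑𝒱 (𝓝 x) := by
        have hmap : map f ↑𝒱 ≤ ↑𝒰 := le_trans (map_mono (h𝒱.trans inf_le_right)) map_comap_le
        exact hmap.trans h𝒰x
      exact ⟨a, tendsto_nhds_unique ht2 ht3⟩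
    · have hC : μ (⋂ n, closure (B n)) = ⨅ n, μ (closure (B n)) :=
        Directed.measure_iInter
          (fun n => isClosed_closure.measurableSet.nullMeasurableSet)
          hclanti.directed_ge ⟨0, measure_ne_top μ _⟩
      calc μ (range f) ≤ ⨅ n, (μ (closure (B n)) + δ) :=
            le_iInf fun n => (hbound n).trans (add_le_add_left (measure_mono subset_closure) δ)
        _ = (⨅ n, μ (closure (B n))) + δ := by
            rw [ENNReal.iInf_add]
        _ = μ (⋂ n, closure (B n)) + δ := by rw [hC]
  -- assemble
  have hex : ∀ n : ℕ, ∃ C, MeasurableSet C ∧ C ⊆ range f ∧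
      μ (range f) ≤ μ C + ((n : ℝ≥0∞) + 1)⁻¹ := fun n =>
    key _ (ENNReal.inv_pos.mpr (ENNReal.add_ne_top.mpr ⟨ENNReal.natCast_ne_top n, ENNReal.one_ne_top⟩))
      (ENNReal.inv_ne_top.mpr (by simp : ((n : ℝ≥0∞) + 1) ≠ 0))
  choose C hCm hCsub hCle using hex
  have hBm : MeasurableSet (⋃ n, C n) := MeasurableSet.iUnion hCm
  have hBsub : (⋃ n, C n) ⊆ range f := iUnion_subset hCsub
  have hle : μ (range f) ≤ μ (⋃ n, C n) := by
    refine ENNReal.le_of_forall_pos_le_add fun r hr hfin => ?_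
    have hr0 : (r : ℝ≥0∞) ≠ 0 := by exact_mod_cast hr.ne'
    obtain ⟨n, hn⟩ := ENNReal.exists_inv_nat_lt hr0
    have h2 : ((n : ℝ≥0∞) + 1)⁻¹ ≤ (r : ℝ≥0∞) := by
      refine le_trans ?_ hn.le
      exact ENNReal.inv_le_inv.mpr (le_add_of_nonneg_right zero_le_one)
    calc μ (range f) ≤ μ (C n) + ((n : ℝ≥0∞) + 1)⁻¹ := hCle n
      _ ≤ μ (⋃ n, C n) + r := add_le_add (measure_mono (subset_iUnion C n)) h2
  have hdiff : μ (range f \ ⋃ n, C n) = 0 := by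
    have h1 : range f \ ⋃ n, C n ⊆ toMeasurable μ (range f) \ ⋃ n, C n :=
      diff_subset_diff_left (subset_toMeasurable _ _)
    refine measure_mono_null h1 ?_
    have h2 : μ (toMeasurable μ (range f) \ ⋃ n, C n) =
        μ (toMeasurable μ (range f)) - μ (⋃ n, C n) :=
      measure_diff (hBsub.trans (subset_toMeasurable _ _)) hBm.nullMeasurableSet
        (measure_ne_top μ _)
    rw [h2, measure_toMeasurable]
    exact tsub_eq_zero_of_le hle
  rw [← union_diff_cancel hBsub]
  exact hBm.nullMeasurableSet.union (NullMeasurableSet.of_null hdiff)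


/-- The variation condition for a kernel `h` transfers to its linear Hoeffding part `h₁`,
with the same constants (inequality (2) in the paper). Expectations of the (possibly
non-measurable) suprema are taken as integrals of `ℝ≥0∞`-valued suprema. -/
theorem stmt_2 {Ω H : Type*} [MeasurableSpace Ω]
    [NormedAddCommGroup H] [InnerProductSpace ℝ H] [CompleteSpace H]
    [TopologicalSpace.SeparableSpace H] [MeasurableSpace H] [BorelSpace H]
    (P : Measure Ω) [IsProbabilityMeasure P]
    (h : H → H → H) (hmeas : Measurable (Function.uncurry h))
    (X X' : Ω → H) (hX : Measurable X) (hX' : Measurable X')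
    (hindep : IndepFun X X' P) (hid : IdentDistrib X X' P P)
    (h₁ : H → H) (hh₁int : ∀ x : H, Integrable (fun ω => h x (X' ω)) P)
    (hh₁ : ∀ x, h₁ x = ∫ ω, h x (X' ω) ∂P)
    (L ε₀ : ℝ) (hL : 0 < L) (hε₀ : 0 < ε₀)
    (hvar : ∀ ε ∈ Set.Ioo (0 : ℝ) ε₀,
      (∫⁻ ω, (⨆ x ∈ {x : H | ‖x - X ω‖ ≤ ε}, ⨆ y ∈ {y : H | ‖y - X' ω‖ ≤ ε},
          ENNReal.ofReal ‖h x y - h (X ω) (X' ω)‖) ^ 2 ∂P)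
        ≤ ENNReal.ofReal (L * ε)) :
    ∀ ε ∈ Set.Ioo (0 : ℝ) ε₀,
      (∫⁻ ω, (⨆ x ∈ {x : H | ‖x - X ω‖ ≤ ε},
          ENNReal.ofReal ‖h₁ x - h₁ (X ω)‖) ^ 2 ∂P)
        ≤ ENNReal.ofReal (L * ε) := by
  intro ε hε
  obtain ⟨hε0, hεε₀⟩ := hε
  classical
  set μ : Measure H := P.map X with hμ
  set ν : Measure H := P.map X' with hν
  haveI : IsProbabilityMeasure μ := Measure.isProbabilityMeasure_map hX.aemeasurable
  haveI : IsProbabilityMeasure ν := Measure.isProbabilityMeasure_map hX'.aemeasurable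
  set s : H × H → ℝ≥0∞ := fun p =>
    ⨆ x ∈ {x : H | ‖x - p.1‖ ≤ ε}, ⨆ y ∈ {y : H | ‖y - p.2‖ ≤ ε},
      ENNReal.ofReal ‖h x y - h p.1 p.2‖ with hs
  set ρ : H × H → ℝ≥0∞ := fun p =>
    ∫⁻ v, (ENNReal.ofReal ‖h p.1 v - h p.2 v‖) ^ 2 ∂ν with hρ
  have hρm : Measurable ρ := by
    have h1 : Measurable fun z : (H × H) × H =>
        (ENNReal.ofReal ‖h z.1.1 z.2 - h z.1.2 z.2‖) ^ 2 := by
      have ha : Measurable fun z : (H × H) × H => h z.1.1 z.2 :=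
        hmeas.comp ((measurable_fst.fst).prodMk measurable_snd)
      have hb : Measurable fun z : (H × H) × H => h z.1.2 z.2 :=
        hmeas.comp ((measurable_fst.snd).prodMk measurable_snd)
      exact ((ha.sub hb).norm.ennreal_ofReal).pow_const 2
    exact h1.lintegral_prod_right'
  set R : H → ℝ≥0∞ := fun u => ⨆ x ∈ {x : H | ‖x - u‖ ≤ ε}, ρ (x, u) with hR
  have hcore : ∀ x u : H, (ENNReal.ofReal ‖h₁ x - h₁ u‖) ^ 2 ≤ ρ (x, u) := by
    intro x u
    have hxint := hh₁int x
    have huint := hh₁int u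
    have hsubint : Integrable (fun ω' => h x (X' ω') - h u (X' ω')) P := hxint.sub huint
    have e1 : h₁ x - h₁ u = ∫ ω', (h x (X' ω') - h u (X' ω')) ∂P := by
      rw [hh₁ x, hh₁ u, integral_sub hxint huint]
    have hFm : Measurable fun v : H => ENNReal.ofReal ‖h x v - h u v‖ := by
      have ha : Measurable fun v : H => h x v := hmeas.comp measurable_prodMk_left
      have hb : Measurable fun v : H => h u v := hmeas.comp measurable_prodMk_left
      exact (ha.sub hb).norm.ennreal_ofReal
    calc (ENNReal.ofReal ‖h₁ x - h₁ u‖) ^ 2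
        ≤ (ENNReal.ofReal (∫ ω', ‖h x (X' ω') - h u (X' ω')‖ ∂P)) ^ 2 := by
          rw [e1]
          exact pow_le_pow_left₀ zero_le
            (ENNReal.ofReal_le_ofReal (norm_integral_le_integral_norm _)) 2
      _ = (∫⁻ ω', ENNReal.ofReal ‖h x (X' ω') - h u (X' ω')‖ ∂P) ^ 2 := by
          rw [ofReal_integral_eq_lintegral_ofReal hsubint.norm
            (Filter.Eventually.of_forall fun _ => norm_nonneg _)]
      _ = (∫⁻ v, ENNReal.ofReal ‖h x v - h u v‖ ∂ν) ^ 2 := by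
          rw [hν, lintegral_map hFm hX']
      _ ≤ ∫⁻ v, (ENNReal.ofReal ‖h x v - h u v‖) ^ 2 ∂ν :=
          lintegral_sq' ν hFm.aemeasurable
      _ = ρ (x, u) := rfl
  have hρs : ∀ u x : H, ‖x - u‖ ≤ ε → ∀ v : H,
      (ENNReal.ofReal ‖h x v - h u v‖) ^ 2 ≤ s (u, v) ^ 2 := by
    intro u x hx v
    refine pow_le_pow_left₀ zero_le ?_ 2
    refine le_iSup₂_of_le x hx ?_
    exact le_iSup₂_of_le v (by simpa using hε0.le) le_rfl
  have hRlev : ∀ t : ℝ≥0∞, NullMeasurableSet {u : H | t < R u} μ := by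
    intro t
    have hset : {u : H | t < R u} =
        Prod.snd '' {p : H × H | ‖p.1 - p.2‖ ≤ ε ∧ t < ρ p} := by
      ext u
      simp only [Set.mem_setOf_eq, Set.mem_image]
      constructor
      · intro hu
        obtain ⟨x, hx⟩ := lt_iSup_iff.mp hu
        obtain ⟨hxS, hx2⟩ := lt_iSup_iff.mp hx
        exact ⟨(x, u), ⟨hxS, hx2⟩, rfl⟩
      · rintro ⟨⟨x, u'⟩, ⟨h1, h2⟩, rfl⟩
        exact lt_iSup_iff.mpr ⟨x, lt_iSup_iff.mpr ⟨h1, h2⟩⟩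
    rw [hset]
    have hm1 : MeasurableSet {p : H × H | ‖p.1 - p.2‖ ≤ ε ∧ t < ρ p} := by
      rw [Set.setOf_and]
      exact (measurableSet_le ((measurable_fst.sub measurable_snd).norm) measurable_const).inter
        (measurableSet_lt measurable_const hρm)
    exact analyticSet_nullMeasurableSet (hm1.analyticSet_image measurable_snd) μ
  have hslev : ∀ t : ℝ≥0∞, NullMeasurableSet {p : H × H | t < s p} (μ.prod ν) := by
    intro t
    have hset : {p : H × H | t < s p} = Prod.snd ''
        {z : (H × H) × (H × H) | ‖z.1.1 - z.2.1‖ ≤ ε ∧ ‖z.1.2 - z.2.2‖ ≤ ε ∧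
          t < ENNReal.ofReal ‖h z.1.1 z.1.2 - h z.2.1 z.2.2‖} := by
      ext p
      simp only [Set.mem_setOf_eq, Set.mem_image]
      constructor
      · intro hp
        obtain ⟨x, hx⟩ := lt_iSup_iff.mp hp
        obtain ⟨hx1, hx2⟩ := lt_iSup_iff.mp hx
        obtain ⟨y, hy⟩ := lt_iSup_iff.mp hx2
        obtain ⟨hy1, hy2⟩ := lt_iSup_iff.mp hy
        exact ⟨((x, y), p), ⟨hx1, hy1, hy2⟩, rfl⟩
      · rintro ⟨⟨⟨x, y⟩, p'⟩, ⟨h1, h2, h3⟩, rfl⟩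
        exact lt_iSup_iff.mpr ⟨x, lt_iSup_iff.mpr ⟨h1,
          lt_iSup_iff.mpr ⟨y, lt_iSup_iff.mpr ⟨h2, h3⟩⟩⟩⟩
    rw [hset]
    have hm1 : MeasurableSet {z : (H × H) × (H × H) |
        ‖z.1.1 - z.2.1‖ ≤ ε ∧ ‖z.1.2 - z.2.2‖ ≤ ε ∧
          t < ENNReal.ofReal ‖h z.1.1 z.1.2 - h z.2.1 z.2.2‖} := by
      rw [Set.setOf_and, Set.setOf_and]
      refine (measurableSet_le ((measurable_fst.fst.sub measurable_snd.fst).norm)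
        measurable_const).inter
        ((measurableSet_le ((measurable_fst.snd.sub measurable_snd.snd).norm)
          measurable_const).inter ?_)
      refine measurableSet_lt measurable_const ?_
      have ha : Measurable fun z : (H × H) × (H × H) => h z.1.1 z.1.2 :=
        hmeas.comp measurable_fst
      have hb : Measurable fun z : (H × H) × (H × H) => h z.2.1 z.2.2 :=
        hmeas.comp measurable_snd
      exact (ha.sub hb).norm.ennreal_ofReal
    exact analyticSet_nullMeasurableSet (hm1.analyticSet_image measurable_snd) (μ.prod ν)
  obtain ⟨Rbar, hRbarm, hRbarge, hRbarae⟩ := exists_measurable_majorant μ R hRlev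
  obtain ⟨sbar, hsbarm, hsbarge, hsbarae⟩ := exists_measurable_majorant (μ.prod ν) s hslev
  set qbar : H × H → ℝ≥0∞ := fun p => sbar p ^ 2 with hqbar
  have hqbarm : Measurable qbar := hsbarm.pow_const 2
  set kbar : H → ℝ≥0∞ := fun u => ∫⁻ v, qbar (u, v) ∂ν with hkbar
  have hkbarm : Measurable kbar := hqbarm.lintegral_prod_right'
  have hRk : ∀ u, R u ≤ kbar u := by
    intro u
    refine iSup₂_le fun x hx => ?_
    calc ρ (x, u) ≤ ∫⁻ v, s (u, v) ^ 2 ∂ν := lintegral_mono fun v => hρs u x hx v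
      _ ≤ ∫⁻ v, qbar (u, v) ∂ν :=
          lintegral_mono fun v => pow_le_pow_left₀ zero_le (hsbarge (u, v)) 2
      _ = kbar u := rfl
  have hRbark : Rbar ≤ᵐ[μ] kbar := by
    filter_upwards [hRbarae] with u hu
    rw [hu]
    exact hRk u
  have hpair : P.map (fun ω => (X ω, X' ω)) = μ.prod ν :=
    (indepFun_iff_map_prod_eq_prod_map_map hX.aemeasurable hX'.aemeasurable).mp hindep
  have hqbarq : qbar =ᵐ[μ.prod ν] fun p => s p ^ 2 := by
    filter_upwards [hsbarae] with p hp
    simp only [hqbar, hp]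
  calc ∫⁻ ω, (⨆ x ∈ {x : H | ‖x - X ω‖ ≤ ε}, ENNReal.ofReal ‖h₁ x - h₁ (X ω)‖) ^ 2 ∂P
      ≤ ∫⁻ ω, Rbar (X ω) ∂P := by
        refine lintegral_mono fun ω => ?_
        refine sq_biSup_le fun x hx => ?_
        calc (ENNReal.ofReal ‖h₁ x - h₁ (X ω)‖) ^ 2 ≤ ρ (x, X ω) := hcore x (X ω)
          _ ≤ R (X ω) :=
              le_iSup₂ (f := fun x (_ : x ∈ {x : H | ‖x - X ω‖ ≤ ε}) => ρ (x, X ω)) x hx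
          _ ≤ Rbar (X ω) := hRbarge (X ω)
    _ = ∫⁻ u, Rbar u ∂μ := by rw [hμ, lintegral_map hRbarm hX]
    _ ≤ ∫⁻ u, kbar u ∂μ := lintegral_mono_ae hRbark
    _ = ∫⁻ p, qbar p ∂(μ.prod ν) := (lintegral_prod qbar hqbarm.aemeasurable).symm
    _ = ∫⁻ p, s p ^ 2 ∂(μ.prod ν) := lintegral_congr_ae hqbarq
    _ = ∫⁻ p, s p ^ 2 ∂(P.map fun ω => (X ω, X' ω)) := by rw [hpair]
    _ ≤ ∫⁻ ω, s (X ω, X' ω) ^ 2 ∂P := lintegral_map_le _ (fun ω => (X ω, X' ω))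
    _ ≤ ENNReal.ofReal (L * ε) := hvar ε ⟨hε0, hεε₀⟩
end

section
/- Let H be a separable real Hilbert space and let X, X̃ be independent identically distributed H-valued random variables such that there exists C > 0 with P(‖X − x‖ ≤ ε) ≤ Cε for all x ∈ H and all ε > 0. Define the spatial sign kernel h(x,y) := (x−y)/‖x−y‖ for x ≠ y and h(x,x) := 0. Then h satisfies the variation condition with respect to (X,X̃): there exist L, ε₀ > 0 such that for every ε ∈ (0,ε₀), E[( sup_{‖x−X‖≤ε, ‖y−X̃‖≤ε} ‖h(x,y) − h(X,X̃)‖ )²] ≤ Lε (the expectation of the supremum interpreted as an upper/outer integral if necessary). -/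
open MeasureTheory ProbabilityTheory

lemma aux_sign {H : Type*} [NormedAddCommGroup H] [NormedSpace ℝ H]
    (u v : H) (hu : u ≠ 0) (hv : v ≠ 0) :
    ‖‖u‖⁻¹ • u - ‖v‖⁻¹ • v‖ ≤ 2 * ‖u - v‖ / ‖u‖ := by
  have hu' : (0:ℝ) < ‖u‖ := norm_pos_iff.mpr hu
  have hv' : (0:ℝ) < ‖v‖ := norm_pos_iff.mpr hv
  have key : ‖u‖⁻¹ • u - ‖v‖⁻¹ • v = ‖u‖⁻¹ • (u - v) + (‖u‖⁻¹ - ‖v‖⁻¹) • v := by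
    rw [smul_sub, sub_smul]; abel
  rw [key]
  have h1 : ‖‖u‖⁻¹ • (u - v)‖ = ‖u - v‖ / ‖u‖ := by
    rw [norm_smul, Real.norm_eq_abs, abs_of_pos (inv_pos.mpr hu')]
    rw [div_eq_inv_mul]
  have h2 : ‖(‖u‖⁻¹ - ‖v‖⁻¹) • v‖ ≤ ‖u - v‖ / ‖u‖ := by
    rw [norm_smul, Real.norm_eq_abs]
    have e : ‖u‖⁻¹ - ‖v‖⁻¹ = (‖v‖ - ‖u‖) * (‖u‖⁻¹ * ‖v‖⁻¹) := by
      field_simp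
    rw [e, abs_mul, abs_of_pos (by positivity : (0:ℝ) < ‖u‖⁻¹ * ‖v‖⁻¹)]
    have h3 : |‖v‖ - ‖u‖| ≤ ‖u - v‖ := by
      rw [norm_sub_rev]; exact abs_norm_sub_norm_le v u
    calc |‖v‖ - ‖u‖| * (‖u‖⁻¹ * ‖v‖⁻¹) * ‖v‖
        = |‖v‖ - ‖u‖| / ‖u‖ := by field_simp
      _ ≤ ‖u - v‖ / ‖u‖ := by gcongr
  calc ‖‖u‖⁻¹ • (u - v) + (‖u‖⁻¹ - ‖v‖⁻¹) • v‖
      ≤ ‖‖u‖⁻¹ • (u - v)‖ + ‖(‖u‖⁻¹ - ‖v‖⁻¹) • v‖ := norm_add_le _ _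
    _ ≤ ‖u - v‖ / ‖u‖ + ‖u - v‖ / ‖u‖ := by rw [h1]; gcongr
    _ = 2 * ‖u - v‖ / ‖u‖ := by ring

lemma aux_smallball {Ω H : Type*} [MeasurableSpace Ω]
    [NormedAddCommGroup H] [InnerProductSpace ℝ H]
    [TopologicalSpace.SeparableSpace H] [MeasurableSpace H] [BorelSpace H]
    (P : Measure Ω) [IsProbabilityMeasure P]
    (X X' : Ω → H) (hX : Measurable X) (hX' : Measurable X')
    (hindep : IndepFun X X' P) (hid : IdentDistrib X X' P P)
    (C : ℝ)
    (hball : ∀ (x : H) (ε : ℝ), 0 < ε → P {ω | ‖X ω - x‖ ≤ ε} ≤ ENNReal.ofReal (C * ε))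
    (t : ℝ) (ht : 0 < t) :
    P {ω | ‖X ω - X' ω‖ ≤ t} ≤ ENNReal.ofReal (C * t) := by
  have hmap : Measure.map (fun ω => (X ω, X' ω)) P
      = (Measure.map X P).prod (Measure.map X' P) :=
    (indepFun_iff_map_prod_eq_prod_map_map hX.aemeasurable hX'.aemeasurable).mp hindep
  have hνμ : Measure.map X' P = Measure.map X P := hid.map_eq.symm
  haveI : SecondCountableTopology H := UniformSpace.secondCountable_of_separable H
  set s : Set (H × H) := {p : H × H | ‖p.1 - p.2‖ ≤ t} with hs
  have hsm : MeasurableSet s := by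
    have : Continuous fun p : H × H => ‖p.1 - p.2‖ := by fun_prop
    exact measurableSet_le this.measurable measurable_const
  have e1 : {ω | ‖X ω - X' ω‖ ≤ t} = (fun ω => (X ω, X' ω)) ⁻¹' s := rfl
  rw [e1, ← Measure.map_apply (hX.prodMk hX') hsm, hmap, hνμ,
    Measure.prod_apply hsm]
  have hslice : ∀ x : H, (Measure.map X P) (Prod.mk x ⁻¹' s) ≤ ENNReal.ofReal (C * t) := by
    intro x
    have e2 : Prod.mk x ⁻¹' s = {y : H | ‖y - x‖ ≤ t} := by
      ext y; simp [hs, norm_sub_rev]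
    rw [e2, Measure.map_apply hX (by
      exact measurableSet_le (by fun_prop : Continuous fun y : H => ‖y - x‖).measurable
        measurable_const)]
    exact hball x t ht
  calc ∫⁻ x, (Measure.map X P) (Prod.mk x ⁻¹' s) ∂(Measure.map X P)
      ≤ ∫⁻ _, ENNReal.ofReal (C * t) ∂(Measure.map X P) := lintegral_mono hslice
    _ = ENNReal.ofReal (C * t) := by
        rw [lintegral_const]
        have : IsProbabilityMeasure (Measure.map X P) := Measure.isProbabilityMeasure_map hX.aemeasurable
        simp

/-- Under the small-ball condition `P(‖X − x‖ ≤ ε) ≤ Cε`, the spatial sign kernel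
`h(x,y) = (x−y)/‖x−y‖` (with `h(x,x) = 0`) satisfies the variation condition with respect
to an i.i.d. pair `(X, X̃)`; the expectation of the supremum is taken as a `ℝ≥0∞`-valued
integral. -/
theorem stmt_15 {Ω H : Type*} [MeasurableSpace Ω]
    [NormedAddCommGroup H] [InnerProductSpace ℝ H] [CompleteSpace H]
    [TopologicalSpace.SeparableSpace H] [MeasurableSpace H] [BorelSpace H]
    (P : Measure Ω) [IsProbabilityMeasure P]
    (X X' : Ω → H) (hX : Measurable X) (hX' : Measurable X')
    (hindep : IndepFun X X' P) (hid : IdentDistrib X X' P P)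
    (C : ℝ) (hC : 0 < C)
    (hball : ∀ (x : H) (ε : ℝ), 0 < ε → P {ω | ‖X ω - x‖ ≤ ε} ≤ ENNReal.ofReal (C * ε))
    (h : H → H → H)
    (hdiag : ∀ x : H, h x x = 0)
    (hker : ∀ x y : H, x ≠ y → h x y = ‖x - y‖⁻¹ • (x - y)) :
    ∃ L > 0, ∃ ε₀ > 0, ∀ ε ∈ Set.Ioo (0 : ℝ) ε₀,
      (∫⁻ ω, (⨆ x ∈ {x : H | ‖x - X ω‖ ≤ ε}, ⨆ y ∈ {y : H | ‖y - X' ω‖ ≤ ε},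
          ENNReal.ofReal ‖h x y - h (X ω) (X' ω)‖) ^ 2 ∂P)
        ≤ ENNReal.ofReal (L * ε) := by
  have hnorm : ∀ u v : H, ‖h u v‖ ≤ 1 := by
    intro u v
    by_cases huv : u = v
    · subst huv; rw [hdiag]; simp
    · rw [hker u v huv, norm_smul, Real.norm_eq_abs,
        abs_of_pos (inv_pos.mpr (norm_pos_iff.mpr (sub_ne_zero.mpr huv)))]
      rw [inv_mul_cancel₀ (norm_ne_zero_iff.mpr (sub_ne_zero.mpr huv))]
  refine ⟨128 * C, by positivity, 1, one_pos, ?_⟩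
  rintro ε ⟨hε, hε1⟩
  set D : Ω → ℝ := fun ω => ‖X ω - X' ω‖ with hDdef
  have hDm : Measurable D := (hX.sub hX').norm
  -- the events
  set A : ℕ → Set Ω := fun k =>
    Nat.casesOn k {ω | D ω ≤ 4 * ε}
      (fun k => {ω | 4 * ε * 2 ^ k < D ω ∧ D ω ≤ 4 * ε * 2 ^ (k + 1)}) with hAdef
  have hAm : ∀ k, MeasurableSet (A k) := by
    intro k
    cases k with
    | zero => exact hDm measurableSet_Iic
    | succ k =>
        exact (hDm measurableSet_Ioi).inter (hDm measurableSet_Iic)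
  -- the constants
  set c : ℕ → ℝ := fun k => 16 * (4:ℝ)⁻¹ ^ k with hcdef
  have hcpos : ∀ k, 0 ≤ c k := by intro k; positivity
  set f : ℕ → Ω → ENNReal := fun k => (A k).indicator (fun _ => ENNReal.ofReal (c k))
    with hfdef
  -- pointwise bound of sup² by the sum
  have hpt : ∀ ω : Ω, (⨆ x ∈ {x : H | ‖x - X ω‖ ≤ ε}, ⨆ y ∈ {y : H | ‖y - X' ω‖ ≤ ε},
      ENNReal.ofReal ‖h x y - h (X ω) (X' ω)‖) ^ 2 ≤ ∑' k, f k ω := by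
    intro ω
    -- find the good index
    obtain ⟨k, hkA, hkB⟩ : ∃ k, ω ∈ A k ∧
        (⨆ x ∈ {x : H | ‖x - X ω‖ ≤ ε}, ⨆ y ∈ {y : H | ‖y - X' ω‖ ≤ ε},
          ENNReal.ofReal ‖h x y - h (X ω) (X' ω)‖) ^ 2 ≤ ENNReal.ofReal (c k) := by
      by_cases hcase : D ω ≤ 4 * ε
      · refine ⟨0, hcase, ?_⟩
        have hsup : (⨆ x ∈ {x : H | ‖x - X ω‖ ≤ ε}, ⨆ y ∈ {y : H | ‖y - X' ω‖ ≤ ε},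
            ENNReal.ofReal ‖h x y - h (X ω) (X' ω)‖) ≤ ENNReal.ofReal 2 := by
          refine iSup₂_le fun x hx => iSup₂_le fun y hy => ENNReal.ofReal_le_ofReal ?_
          calc ‖h x y - h (X ω) (X' ω)‖ ≤ ‖h x y‖ + ‖h (X ω) (X' ω)‖ := norm_sub_le _ _
            _ ≤ 1 + 1 := add_le_add (hnorm _ _) (hnorm _ _)
            _ = 2 := by norm_num
        calc (⨆ x ∈ {x : H | ‖x - X ω‖ ≤ ε}, ⨆ y ∈ {y : H | ‖y - X' ω‖ ≤ ε},
            ENNReal.ofReal ‖h x y - h (X ω) (X' ω)‖) ^ 2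
            ≤ ENNReal.ofReal 2 ^ 2 := pow_le_pow_left₀ zero_le hsup 2
          _ = ENNReal.ofReal 4 := by
              rw [← ENNReal.ofReal_pow (by norm_num)]; norm_num
          _ ≤ ENNReal.ofReal (c 0) := by
              apply ENNReal.ofReal_le_ofReal; simp [hcdef]; norm_num
      · push_neg at hcase
        -- find k with 4ε2^k < D ≤ 4ε2^(k+1)
        have hex : ∃ n : ℕ, D ω ≤ 4 * ε * 2 ^ n := by
          obtain ⟨n, hn⟩ := pow_unbounded_of_one_lt (D ω / (4 * ε)) (one_lt_two)
          exact ⟨n, by rw [div_lt_iff₀ (by positivity)] at hn; nlinarith⟩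
        classical
        set m := Nat.find hex with hm
        have hm0 : m ≠ 0 := by
          intro h0
          have := Nat.find_spec hex
          rw [← hm, h0] at this
          simp at this
          linarith
        obtain ⟨k, hk⟩ := Nat.exists_eq_succ_of_ne_zero hm0
        have hupper : D ω ≤ 4 * ε * 2 ^ (k + 1) := by
          have := Nat.find_spec hex; rw [← hm, hk] at this; exact this
        have hlower : 4 * ε * 2 ^ k < D ω := by
          have := Nat.find_min hex (m := k) (by omega)
          push_neg at this; exact this
        refine ⟨k + 1, ⟨hlower, hupper⟩, ?_⟩
        -- on this event the sup is at most 2/2^k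
        have hDpos : (0:ℝ) < D ω := lt_trans (by positivity) hlower
        have hD4 : 4 * ε < D ω := by
          have h2k : (1:ℝ) ≤ 2 ^ k := one_le_pow₀ (by norm_num)
          nlinarith
        have hab : X ω ≠ X' ω := by
          intro hEq
          rw [hDdef] at hDpos
          simp only at hDpos
          rw [hEq] at hDpos; simp at hDpos
        have hsup : (⨆ x ∈ {x : H | ‖x - X ω‖ ≤ ε}, ⨆ y ∈ {y : H | ‖y - X' ω‖ ≤ ε},
            ENNReal.ofReal ‖h x y - h (X ω) (X' ω)‖) ≤ ENNReal.ofReal (2 / 2 ^ k) := by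
          refine iSup₂_le fun x hx => iSup₂_le fun y hy => ENNReal.ofReal_le_ofReal ?_
          simp only [Set.mem_setOf_eq] at hx hy
          -- norms
          have hdiff : ‖(x - y) - (X ω - X' ω)‖ ≤ 2 * ε := by
            have : (x - y) - (X ω - X' ω) = (x - X ω) - (y - X' ω) := by abel
            rw [this]
            calc ‖(x - X ω) - (y - X' ω)‖ ≤ ‖x - X ω‖ + ‖y - X' ω‖ := norm_sub_le _ _
              _ ≤ 2 * ε := by linarith
          have hxy : D ω / 2 ≤ ‖x - y‖ := by
            have h1 : D ω ≤ ‖x - y‖ + ‖(x - y) - (X ω - X' ω)‖ := by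
              have e : X ω - X' ω = (x - y) - ((x - y) - (X ω - X' ω)) := by abel
              calc D ω = ‖X ω - X' ω‖ := rfl
                _ = ‖(x - y) - ((x - y) - (X ω - X' ω))‖ := by rw [← e]
                _ ≤ ‖x - y‖ + ‖(x - y) - (X ω - X' ω)‖ := norm_sub_le _ _
            linarith
          have hxy0 : x ≠ y := by
            intro hEq
            have : (0:ℝ) < ‖x - y‖ := lt_of_lt_of_le (by linarith) hxy
            rw [hEq] at this; simp at this
          rw [hker x y hxy0, hker (X ω) (X' ω) hab]
          calc ‖‖x - y‖⁻¹ • (x - y) - ‖X ω - X' ω‖⁻¹ • (X ω - X' ω)‖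
              ≤ 2 * ‖(x - y) - (X ω - X' ω)‖ / ‖x - y‖ :=
                aux_sign _ _ (sub_ne_zero.mpr hxy0) (sub_ne_zero.mpr hab)
            _ ≤ 2 * (2 * ε) / (D ω / 2) := by
                apply div_le_div₀ (by positivity) (by linarith) (by linarith) hxy
            _ = 8 * ε / D ω := by field_simp; ring
            _ ≤ 2 / 2 ^ k := by
                rw [div_le_div_iff₀ hDpos (by positivity)]
                nlinarith [hlower, pow_pos (by norm_num : (0:ℝ) < 2) k]
        calc (⨆ x ∈ {x : H | ‖x - X ω‖ ≤ ε}, ⨆ y ∈ {y : H | ‖y - X' ω‖ ≤ ε},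
            ENNReal.ofReal ‖h x y - h (X ω) (X' ω)‖) ^ 2
            ≤ ENNReal.ofReal (2 / 2 ^ k) ^ 2 := pow_le_pow_left₀ zero_le hsup 2
          _ = ENNReal.ofReal ((2 / 2 ^ k) ^ 2) := by
              rw [ENNReal.ofReal_pow (by positivity)]
          _ ≤ ENNReal.ofReal (c (k + 1)) := by
              apply ENNReal.ofReal_le_ofReal
              have hpow : ((2:ℝ)^k)^2 = 4^k := by
                rw [← pow_mul, mul_comm k 2, pow_mul]; norm_num
              have e2 : ((2:ℝ)/2^k)^2 = 4/4^k := by rw [div_pow, hpow]; norm_num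
              have e3 : c (k+1) = 4/4^k := by
                rw [hcdef]; show (16:ℝ) * 4⁻¹^(k+1) = 4/4^k
                rw [pow_succ, inv_pow]; field_simp; ring
              rw [e2, e3]
    calc (⨆ x ∈ {x : H | ‖x - X ω‖ ≤ ε}, ⨆ y ∈ {y : H | ‖y - X' ω‖ ≤ ε},
        ENNReal.ofReal ‖h x y - h (X ω) (X' ω)‖) ^ 2
        ≤ ENNReal.ofReal (c k) := hkB
      _ = f k ω := by rw [hfdef]; simp [Set.indicator_of_mem hkA]
      _ ≤ ∑' j, f j ω := ENNReal.le_tsum k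
  -- integrate
  have hfm : ∀ k, AEMeasurable (f k) P := by
    intro k
    exact ((measurable_const.indicator (hAm k))).aemeasurable
  calc (∫⁻ ω, (⨆ x ∈ {x : H | ‖x - X ω‖ ≤ ε}, ⨆ y ∈ {y : H | ‖y - X' ω‖ ≤ ε},
        ENNReal.ofReal ‖h x y - h (X ω) (X' ω)‖) ^ 2 ∂P)
      ≤ ∫⁻ ω, ∑' k, f k ω ∂P := lintegral_mono hpt
    _ = ∑' k, ∫⁻ ω, f k ω ∂P := lintegral_tsum hfm
    _ ≤ ∑' k, ENNReal.ofReal (64 * C * ε * (2⁻¹:ℝ) ^ k) := by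
        apply ENNReal.tsum_le_tsum
        intro k
        have hint : ∫⁻ ω, f k ω ∂P = ENNReal.ofReal (c k) * P (A k) := by
          rw [hfdef]
          simp only
          rw [lintegral_indicator (hAm k), setLIntegral_const]
        rw [hint]
        have hPA : P (A k) ≤ ENNReal.ofReal (C * (4 * ε * 2 ^ k)) := by
          cases k with
          | zero =>
              have := aux_smallball P X X' hX hX' hindep hid C hball (4 * ε) (by positivity)
              simpa [hAdef, hDdef] using this
          | succ k =>
              have hsub : A (k + 1) ⊆ {ω | ‖X ω - X' ω‖ ≤ 4 * ε * 2 ^ (k+1)} := by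
                intro ω hω; exact hω.2
              calc P (A (k+1)) ≤ P {ω | ‖X ω - X' ω‖ ≤ 4 * ε * 2 ^ (k+1)} :=
                    measure_mono hsub
                _ ≤ ENNReal.ofReal (C * (4 * ε * 2 ^ (k+1))) :=
                    aux_smallball P X X' hX hX' hindep hid C hball _ (by positivity)
        calc ENNReal.ofReal (c k) * P (A k)
            ≤ ENNReal.ofReal (c k) * ENNReal.ofReal (C * (4 * ε * 2 ^ k)) := by
              exact mul_le_mul_right hPA _
          _ = ENNReal.ofReal (c k * (C * (4 * ε * 2 ^ k))) := by
              rw [ENNReal.ofReal_mul (hcpos k)]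
          _ ≤ ENNReal.ofReal (64 * C * ε * (2⁻¹:ℝ) ^ k) := by
              apply ENNReal.ofReal_le_ofReal
              rw [hcdef]
              simp only
              have e1 : (16:ℝ) * (4:ℝ)⁻¹ ^ k * (C * (4 * ε * 2 ^ k))
                  = 64 * C * ε * ((4:ℝ)⁻¹ ^ k * 2 ^ k) := by ring
              have e2 : ((4:ℝ)⁻¹) ^ k * 2 ^ k = (2⁻¹:ℝ) ^ k := by
                rw [← mul_pow]; norm_num
              rw [e1, e2]
    _ = ENNReal.ofReal (∑' k : ℕ, 64 * C * ε * (2⁻¹:ℝ) ^ k) :=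
        (ENNReal.ofReal_tsum_of_nonneg (fun k => by positivity)
          ((summable_geometric_of_lt_one (by norm_num) (by norm_num)).mul_left _)).symm
    _ ≤ ENNReal.ofReal (128 * C * ε) := by
        apply ENNReal.ofReal_le_ofReal
        rw [tsum_mul_left, tsum_geometric_of_lt_one (by norm_num) (by norm_num)]
        norm_num
        ring_nf
        try linarith
end
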